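/- Identifiability of the three-component mixture when μ ≠ 0. Let φ(x; m, s) = (1/(s√(2π))) exp(−(x−m)²/(2s²)) denote the density of a normal distribution with mean m and standard deviation s > 0. Suppose μ, ν > 0, σ, τ > 0, and p_L, p_R, q_L, q_R > 0 satisfy p_L·φ(x; −μ, σ) + p_R·φ(x; μ, σ) = q_L·φ(x; −ν, τ) + q_R·φ(x; ν, τ) for every x ∈ ℝ. Then σ = τ, μ = ν, p_L = q_L, and p_R = q_R. (In particular, with the normalization μ > 0 the non-null part of the mixture density h(x) = p_0·0 + p_L·φ(x; −μ, σ) + p_R·φ(x; μ, σ) identifies all of its parameters; without the sign normalization, the identifiability issue concerns only the sign of μ, i.e., the simultaneous swap (p_L, −μ) ↔ (p_R, μ).) -/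

import Mathlib

open Real

/-- The density of a normal distribution with mean `m` and standard
deviation `s`. -/
noncomputable def normalPdf (x m s : ℝ) : ℝ :=
  (1 / (s * Real.sqrt (2 * Real.pi))) * Real.exp (-(x - m) ^ 2 / (2 * s ^ 2))

/-!
As `x → +∞` the component with positive mean dominates, since
`φ(x; -m, s) = exp (-2 m x / s²) φ(x; m, s)`. Hence the identity of the two mixtures gives
`p_R φ(x; μ, σ) ~ q_R φ(x; ν, τ)`, and the logarithm of their ratio is a quadratic
polynomial in `x` tending to `0`. Its coefficients of `x²` and `x` must vanish, so `σ = τ`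
and `μ = ν`; the ratio is then the constant `p_R / q_R`, which must be `1`.
Reflecting `x ↦ -x` exchanges the two components and gives `p_L = q_L` in the same way.
-/

open Filter Topology Asymptotics

theorem eq_zero_of_tendsto_quadratic {a b c L : ℝ}
    (h : Tendsto (fun x => a * x ^ 2 + b * x + c) atTop (𝓝 L)) : a = 0 ∧ b = 0 := by
  open Polynomial in
  have hP : Tendsto (fun x => (C a * X ^ 2 + C b * X + C c).eval x) atTop (𝓝 L) := by
    simpa using h
  have hdeg := (Polynomial.tendsto_nhds_iff _).1 hP |>.2
  constructor
  · simpa using Polynomial.coeff_eq_zero_of_degree_lt (n := 2) (hdeg.trans_lt (by norm_num))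
  · simpa using Polynomial.coeff_eq_zero_of_degree_lt (n := 1) (hdeg.trans_lt (by norm_num))

theorem normalPdf_pos (x m : ℝ) {s : ℝ} (hs : 0 < s) : 0 < normalPdf x m s := by
  unfold normalPdf; positivity

theorem normalPdf_neg (x m s : ℝ) : normalPdf (-x) m s = normalPdf x (-m) s := by
  unfold normalPdf; ring_nf

theorem log_normalPdf (x m : ℝ) {s : ℝ} (hs : 0 < s) :
    Real.log (normalPdf x m s) = -(x - m) ^ 2 / (2 * s ^ 2) - Real.log (s * √(2 * π)) := by
  unfold normalPdf
  rw [Real.log_mul (by positivity) (Real.exp_pos _).ne', Real.log_exp, one_div, Real.log_inv]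
  ring

theorem normalPdf_neg_mean (x m s : ℝ) :
    normalPdf x (-m) s = Real.exp (-(2 * m / s ^ 2) * x) * normalPdf x m s := by
  unfold normalPdf
  rw [mul_left_comm, ← Real.exp_add]
  congr 2
  by_cases hs : s = 0
  · simp [hs]
  field_simp
  ring

theorem normalPdf_neg_mean_isLittleO {m s : ℝ} (hm : 0 < m) (hs : 0 < s) :
    (fun x => normalPdf x (-m) s) =o[atTop] (fun x => normalPdf x m s) := by
  have hexp : Tendsto (fun x => Real.exp (-(2 * m / s ^ 2) * x)) atTop (𝓝 0) :=
    Real.tendsto_exp_atBot.comp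
      (tendsto_id.const_mul_atTop_of_neg (neg_lt_zero.2 (by positivity)))
  simpa [normalPdf_neg_mean] using
    (isLittleO_one_iff ℝ).2 hexp |>.mul_isBigO (isBigO_refl (fun x => normalPdf x m s) atTop)

theorem mixture_isEquivalent_right_component {m s : ℝ} (hm : 0 < m) (hs : 0 < s) {c : ℝ}
    (hc : c ≠ 0) (d : ℝ) :
    (fun x => d * normalPdf x (-m) s + c * normalPdf x m s) ~[atTop]
      (fun x => c * normalPdf x m s) := by
  have hsmall : (fun x => d * normalPdf x (-m) s) =o[atTop] (fun x => c * normalPdf x m s) :=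
    ((normalPdf_neg_mean_isLittleO hm hs).const_mul_left d).const_mul_right hc
  exact (IsEquivalent.refl.add_isLittleO hsmall).congr_left
    (Eventually.of_forall fun x => add_comm _ _)

theorem log_mul_normalPdf_div_mul_normalPdf (x : ℝ) {c d m n s t : ℝ} (hc : 0 < c)
    (hd : 0 < d) (hs : 0 < s) (ht : 0 < t) :
    Real.log (c * normalPdf x m s / (d * normalPdf x n t)) =
      (1 / (2 * t ^ 2) - 1 / (2 * s ^ 2)) * x ^ 2 + (m / s ^ 2 - n / t ^ 2) * x
        + (Real.log c - m ^ 2 / (2 * s ^ 2) - Real.log (s * √(2 * π))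
          - (Real.log d - n ^ 2 / (2 * t ^ 2) - Real.log (t * √(2 * π)))) := by
  have hφs := normalPdf_pos x m hs
  have hφt := normalPdf_pos x n ht
  rw [Real.log_div (mul_pos hc hφs).ne' (mul_pos hd hφt).ne', Real.log_mul hc.ne' hφs.ne',
    Real.log_mul hd.ne' hφt.ne', log_normalPdf x m hs, log_normalPdf x n ht]
  field_simp
  ring

theorem eq_of_isEquivalent_normalPdf {c d m n s t : ℝ} (hc : 0 < c) (hd : 0 < d)
    (hs : 0 < s) (ht : 0 < t)
    (h : (fun x => c * normalPdf x m s) ~[atTop] (fun x => d * normalPdf x n t)) :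
    s = t ∧ m = n ∧ c = d := by
  have hratio : Tendsto (fun x => c * normalPdf x m s / (d * normalPdf x n t)) atTop (𝓝 1) :=
    (isEquivalent_iff_tendsto_one
      (Eventually.of_forall fun x => (mul_pos hd (normalPdf_pos x n ht)).ne')).1 h
  have hlog := (Real.continuousAt_log one_ne_zero).tendsto.comp hratio
  rw [Real.log_one] at hlog
  have hquad := hlog.congr fun x => log_mul_normalPdf_div_mul_normalPdf x hc hd hs ht
  obtain ⟨hvar, hmean⟩ := eq_zero_of_tendsto_quadratic hquad
  have hst : s = t := by
    field_simp at hvar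
    nlinarith
  subst hst
  have hmn : m = n := by
    field_simp at hmean
    linarith
  subst hmn
  refine ⟨rfl, rfl, ?_⟩
  have hconst : ∀ x, c * normalPdf x m s / (d * normalPdf x m s) = c / d := fun x =>
    mul_div_mul_right c d (normalPdf_pos x m hs).ne'
  simp only [hconst] at hratio
  exact (div_eq_one_iff_eq hd.ne').1 (tendsto_nhds_unique tendsto_const_nhds hratio)

theorem mixture_right_tail_eq {μ ν σ τ pL pR qL qR : ℝ}
    (hμ : 0 < μ) (hν : 0 < ν) (hσ : 0 < σ) (hτ : 0 < τ) (hpR : 0 < pR) (hqR : 0 < qR)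
    (h : ∀ x : ℝ,
      pL * normalPdf x (-μ) σ + pR * normalPdf x μ σ =
      qL * normalPdf x (-ν) τ + qR * normalPdf x ν τ) :
    σ = τ ∧ μ = ν ∧ pR = qR := by
  have hleft := (mixture_isEquivalent_right_component hμ hσ hpR.ne' pL).symm
  rw [funext h] at hleft
  exact eq_of_isEquivalent_normalPdf hpR hqR hσ hτ
    (hleft.trans (mixture_isEquivalent_right_component hν hτ hqR.ne' qL))

/-- Identifiability of the three-component mixture when `μ ≠ 0`: with the
normalization `μ, ν > 0`, equality of the two-component non-null mixture
densities `p_L φ(x; -μ, σ) + p_R φ(x; μ, σ)` and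
`q_L φ(x; -ν, τ) + q_R φ(x; ν, τ)` for all `x` forces `σ = τ`, `μ = ν`,
`p_L = q_L`, and `p_R = q_R`. -/
theorem mixture_identifiable
    (μ ν σ τ pL pR qL qR : ℝ)
    (hμ : 0 < μ) (hν : 0 < ν) (hσ : 0 < σ) (hτ : 0 < τ)
    (hpL : 0 < pL) (hpR : 0 < pR) (hqL : 0 < qL) (hqR : 0 < qR)
    (h : ∀ x : ℝ,
      pL * normalPdf x (-μ) σ + pR * normalPdf x μ σ =
      qL * normalPdf x (-ν) τ + qR * normalPdf x ν τ) :
    σ = τ ∧ μ = ν ∧ pL = qL ∧ pR = qR := by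
  obtain ⟨hστ, hμν, hR⟩ := mixture_right_tail_eq hμ hν hσ hτ hpR hqR h
  have hreflected : ∀ x : ℝ,
      pR * normalPdf x (-μ) σ + pL * normalPdf x μ σ =
      qR * normalPdf x (-ν) τ + qL * normalPdf x ν τ := fun x => by
    have := h (-x)
    simp only [normalPdf_neg, neg_neg] at this
    linarith
  obtain ⟨-, -, hL⟩ := mixture_right_tail_eq hμ hν hσ hτ hpL hqL hreflected
  exact ⟨hστ, hμν, hL, hR⟩
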